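/- Let ψ:ℝⁿ→ℝ be continuously differentiable, λ>0, 0<q<1, g(x):=∑_{i=1}^n|x_i|^q, F:=ψ+λg, and let α̃>0, μ̂>0, L̂>0. Let x∈ℝⁿ and let x̂ be a global minimizer over ℝⁿ of z ↦ ⟨∇ψ(x), z−x⟩ + (μ̂/2)‖z−x‖² + λ g(z). If F(x̂) > F(x) − (α̃/2)‖x̂−x‖² and ∇ψ is L̂-Lipschitz on a convex set containing x and x̂, then μ̂ < 2L̂ + α̃. -/

import Mathlib

/-!
Comparing the model value at `x̂` with its value at `z = x` bounds `⟨∇ψ x, x̂ - x⟩ + λ g x̂` by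
`λ g x - (μ̂/2)‖x̂ - x‖²`, and the descent lemma bounds `ψ x̂` by
`ψ x + ⟨∇ψ x, x̂ - x⟩ + (L̂/2)‖x̂ - x‖²`. Hence `F x̂ ≤ F x - ((μ̂ - L̂)/2)‖x̂ - x‖²`, which
contradicts the failed decrease test `F x̂ > F x - (α̃/2)‖x̂ - x‖²` unless `μ̂ < L̂ + α̃`.
-/

open Set
open scoped NNReal

theorem image_one_le_of_deriv_le_add_mul {f f' : ℝ → ℝ} {c K : ℝ}
    (hf : ∀ t ∈ Icc (0 : ℝ) 1, HasDerivAt f (f' t) t)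
    (hf' : ∀ t ∈ Ico (0 : ℝ) 1, f' t ≤ c + K * t) :
    f 1 ≤ f 0 + c + K / 2 := by
  set B : ℝ → ℝ := fun t => f 0 + (c * t + K / 2 * t ^ 2)
  have hB : ∀ t, HasDerivAt B (c + K * t) t := fun t =>
    ((((hasDerivAt_id t).const_mul c).add
      ((hasDerivAt_pow 2 t).const_mul (K / 2))).const_add (f 0)).congr_deriv (by norm_num; ring)
  have key := image_le_of_deriv_right_le_deriv_boundary
    (fun t ht => (hf t ht).continuousAt.continuousWithinAt)
    (fun t ht => (hf t (Ico_subset_Icc_self ht)).hasDerivWithinAt)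
    (by simp [B]) (fun t _ => (hB t).continuousAt.continuousWithinAt)
    (fun t _ => (hB t).hasDerivWithinAt) hf' (right_mem_Icc.2 zero_le_one)
  simpa [B, add_assoc] using key

section Descent

variable {E : Type*} [NormedAddCommGroup E] [InnerProductSpace ℝ E] [CompleteSpace E]

theorem HasGradientAt.hasDerivAt_comp_add_smul {ψ : E → ℝ} {g x v : E} {t : ℝ}
    (hψ : HasGradientAt ψ g (x + t • v)) :
    HasDerivAt (fun s : ℝ => ψ (x + s • v)) (inner ℝ g v) t := by
  have hline : HasDerivAt (fun s : ℝ => x + s • v) v t := by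
    simpa using ((hasDerivAt_id t).smul_const v).const_add x
  exact hψ.hasFDerivAt.comp_hasDerivAt t hline

/-- The descent lemma. -/
theorem Convex.le_add_inner_add_sq_of_lipschitzOnWith_gradient {ψ : E → ℝ} {ψ' : E → E}
    {C : Set E} {L : ℝ≥0} (hC : Convex ℝ C) (hψ : ∀ z ∈ C, HasGradientAt ψ (ψ' z) z)
    (hLip : LipschitzOnWith L ψ' C) {x y : E} (hx : x ∈ C) (hy : y ∈ C) :
    ψ y ≤ ψ x + inner ℝ (ψ' x) (y - x) + L / 2 * ‖y - x‖ ^ 2 := by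
  set v := y - x
  have hseg : ∀ t ∈ Icc (0 : ℝ) 1, x + t • v ∈ C := fun t ht => by
    simpa [v, AffineMap.lineMap_apply_module', add_comm] using
      hC.lineMap_mem hx hy ⟨ht.1, ht.2⟩
  have hderiv : ∀ t ∈ Icc (0 : ℝ) 1,
      HasDerivAt (fun s : ℝ => ψ (x + s • v)) (inner ℝ (ψ' (x + t • v)) v) t :=
    fun t ht => (hψ _ (hseg t ht)).hasDerivAt_comp_add_smul
  have hgrowth : ∀ t ∈ Ico (0 : ℝ) 1,
      inner ℝ (ψ' (x + t • v)) v ≤ inner ℝ (ψ' x) v + L * ‖v‖ ^ 2 * t := by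
    intro t ht
    have hlip : ‖ψ' (x + t • v) - ψ' x‖ ≤ L * (t * ‖v‖) := by
      simpa [norm_smul, abs_of_nonneg ht.1] using
        hLip.norm_sub_le (hseg t (Ico_subset_Icc_self ht)) hx
    calc inner ℝ (ψ' (x + t • v)) v
        = inner ℝ (ψ' x) v + inner ℝ (ψ' (x + t • v) - ψ' x) v := by
          rw [inner_sub_left]; ring
      _ ≤ inner ℝ (ψ' x) v + ‖ψ' (x + t • v) - ψ' x‖ * ‖v‖ := by
          gcongr; exact real_inner_le_norm _ _
      _ ≤ inner ℝ (ψ' x) v + L * (t * ‖v‖) * ‖v‖ := by gcongr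
      _ = inner ℝ (ψ' x) v + L * ‖v‖ ^ 2 * t := by ring
  have key := image_one_le_of_deriv_le_add_mul hderiv hgrowth
  simp only [zero_smul, add_zero, one_smul, v, add_sub_cancel] at key
  linarith

theorem Convex.add_le_add_sub_sq_of_model_le {ψ r : E → ℝ} {ψ' : E → E} {C : Set E}
    {L : ℝ≥0} {μ : ℝ} (hC : Convex ℝ C) (hψ : ∀ z ∈ C, HasGradientAt ψ (ψ' z) z)
    (hLip : LipschitzOnWith L ψ' C) {x x' : E} (hx : x ∈ C) (hx' : x' ∈ C)
    (hmodel : inner ℝ (ψ' x) (x' - x) + μ / 2 * ‖x' - x‖ ^ 2 + r x' ≤ r x) :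
    ψ x' + r x' ≤ ψ x + r x - (μ - L) / 2 * ‖x' - x‖ ^ 2 := by
  have := hC.le_add_inner_add_sq_of_lipschitzOnWith_gradient hψ hLip hx hx'
  linarith

end Descent

theorem stmt5_general (n : ℕ) (q lam alphat μhat Lhat : ℝ) (hL : 0 < Lhat)
    (ψ : EuclideanSpace ℝ (Fin n) → ℝ) (hψ : ContDiff ℝ 1 ψ)
    (x xhat : EuclideanSpace ℝ (Fin n))
    (hmin : ∀ z : EuclideanSpace ℝ (Fin n),
      (inner ℝ (gradient ψ x) (xhat - x) : ℝ) + (μhat / 2) * ‖xhat - x‖ ^ 2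
          + lam * ∑ i, |xhat i| ^ q ≤
        (inner ℝ (gradient ψ x) (z - x) : ℝ) + (μhat / 2) * ‖z - x‖ ^ 2
          + lam * ∑ i, |z i| ^ q)
    (hfail : ψ x + lam * (∑ i, |x i| ^ q) - (alphat / 2) * ‖xhat - x‖ ^ 2 <
      ψ xhat + lam * ∑ i, |xhat i| ^ q)
    (C : Set (EuclideanSpace ℝ (Fin n))) (hC : Convex ℝ C)
    (hxC : x ∈ C) (hxhatC : xhat ∈ C)
    (hLip : LipschitzOnWith (Real.toNNReal Lhat) (gradient ψ) C) :
    μhat < 2 * Lhat + alphat := by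
  have hmodel := hmin x
  simp only [sub_self, inner_zero_right, norm_zero, zero_add, zero_pow two_ne_zero,
    mul_zero] at hmodel
  have hdecrease := hC.add_le_add_sub_sq_of_model_le (r := fun z => lam * ∑ i, |z i| ^ q)
    (fun z _ => (hψ.differentiable one_ne_zero z).hasGradientAt) hLip hxC hxhatC hmodel
  rw [Real.coe_toNNReal _ hL.le] at hdecrease
  have hneg : (μhat - Lhat - alphat) * ‖xhat - x‖ ^ 2 < 0 := by linarith
  have hgap : μhat - Lhat - alphat < 0 := neg_of_mul_neg_left hneg (sq_nonneg _)
  linarith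

/-- if the proximal-gradient trial point `x̂` with step size `μ̂`
fails the sufficient-decrease test `F(x̂) ≤ F(x) − (α̃/2)‖x̂−x‖²` and `∇ψ` is
`L̂`-Lipschitz on a convex set containing `x` and `x̂`, then `μ̂ < 2L̂ + α̃`. -/
theorem stmt5 (n : ℕ) (q lam alphat μhat Lhat : ℝ) (hq0 : 0 < q) (hq1 : q < 1)
    (hlam : 0 < lam) (halpha : 0 < alphat) (hμpos : 0 < μhat) (hL : 0 < Lhat)
    (ψ : EuclideanSpace ℝ (Fin n) → ℝ) (hψ : ContDiff ℝ 1 ψ)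
    (x xhat : EuclideanSpace ℝ (Fin n))
    (hmin : ∀ z : EuclideanSpace ℝ (Fin n),
      (inner ℝ (gradient ψ x) (xhat - x) : ℝ) + (μhat / 2) * ‖xhat - x‖ ^ 2
          + lam * ∑ i, |xhat i| ^ q ≤
        (inner ℝ (gradient ψ x) (z - x) : ℝ) + (μhat / 2) * ‖z - x‖ ^ 2
          + lam * ∑ i, |z i| ^ q)
    (hfail : ψ x + lam * (∑ i, |x i| ^ q) - (alphat / 2) * ‖xhat - x‖ ^ 2 <
      ψ xhat + lam * ∑ i, |xhat i| ^ q)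
    (C : Set (EuclideanSpace ℝ (Fin n))) (hC : Convex ℝ C)
    (hxC : x ∈ C) (hxhatC : xhat ∈ C)
    (hLip : LipschitzOnWith (Real.toNNReal Lhat) (gradient ψ) C) :
    μhat < 2 * Lhat + alphat :=
  stmt5_general n q lam alphat μhat Lhat hL ψ hψ x xhat hmin hfail C hC hxC hxhatC hLip
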